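/- Let Q be a bounded, positive, self-adjoint operator on a complex Hilbert space H, let γ > 0 and T a positive even integer with γ‖Q‖ < 1/4, and let β ≥ 0. There exists a constant c_β < ∞, depending only on β, such that for every R > 0 and every h ∈ H with ‖h‖_H ≤ R: ‖Ḡ_T(Q) Q (Q^{β} h)‖_H ≤ c_β R (γT)^{−β} + ‖Q^{β} h‖_H. (This is Proposition C.8, part 3: Ḡ_T(Q) Q Q^{β} h = L^s g̃_T under the source condition of the preconditioning setting.) -/

import Mathlib

/-- Fractional power `A^r` (for `r : ℝ`) of a bounded operator, via the continuous
functional calculus for self-adjoint operators (real power `x ↦ x ^ r`). -/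
noncomputable def opPow {H : Type*} [NormedAddCommGroup H] [InnerProductSpace ℂ H]
    [CompleteSpace H] (A : H →L[ℂ] H) (r : ℝ) : H →L[ℂ] H :=
  cfc (fun x : ℝ => x ^ r) A

/-- The tail-averaged gradient-descent filter operator
`Ḡ_T(Q) = (2/T) ∑_{t=T/2+1}^{T} γ ∑_{k=0}^{t-1} (I - γQ)^k`. -/
noncomputable def Gbar {H : Type*} [NormedAddCommGroup H] [InnerProductSpace ℂ H]
    [CompleteSpace H] (γ : ℝ) (T : ℕ) (Q : H →L[ℂ] H) : H →L[ℂ] H :=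
  (2 / (T : ℂ)) • ∑ t ∈ Finset.Ioc (T / 2) T,
    (γ : ℂ) • ∑ k ∈ Finset.range t, (1 - (γ : ℂ) • Q) ^ k

/-- The tail-averaged gradient-descent residual operator
`R̄_T(Q) = (2/T) ∑_{t=T/2+1}^{T} (I - γQ)^t`. -/
noncomputable def Rbar {H : Type*} [NormedAddCommGroup H] [InnerProductSpace ℂ H]
    [CompleteSpace H] (γ : ℝ) (T : ℕ) (Q : H →L[ℂ] H) : H →L[ℂ] H :=
  (2 / (T : ℂ)) • ∑ t ∈ Finset.Ioc (T / 2) T, (1 - (γ : ℂ) • Q) ^ t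

/-! Since `Ḡ_T(Q) Q = I - R̄_T(Q)`, the left-hand side is at most `‖Q^β h‖ + ‖R̄_T(Q) Q^β‖ R`.
By the functional calculus, `‖R̄_T(Q) Q^β‖` is bounded by the supremum of `r̄_T(x) x^β` over the
spectrum `σ(Q) ⊆ [0, ‖Q‖]`, where `r̄_T(x) = (2/T) ∑ (1 - γx)^t ≤ (1 - γx)^{T/2} ≤ e^{-γTx/2}`.
With `u = γTx` this is `(γT)^{-β} u^β e^{-u/2}`, and `u^β e^{-u/2}` is bounded on `[0, ∞)`. -/

open Finset Real Nat

lemma rpow_le_one_add_pow {u β : ℝ} {n : ℕ} (hu : 0 ≤ u) (hβ : 0 ≤ β) (hβn : β ≤ n) :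
    u ^ β ≤ 1 + u ^ n := by
  rcases le_total u 1 with hu1 | hu1
  · linarith [rpow_le_one hu hu1 hβ, pow_nonneg hu n]
  · have := rpow_le_rpow_of_exponent_le hu1 hβn
    rw [rpow_natCast] at this
    linarith

lemma pow_mul_exp_neg_half_le (n : ℕ) {u : ℝ} (hu : 0 ≤ u) :
    u ^ n * exp (-(u / 2)) ≤ n ! * 2 ^ n := by
  have h := Real.pow_div_factorial_le_exp (u / 2) (by positivity) n
  rw [exp_neg, ← div_eq_mul_inv, div_le_iff₀ (exp_pos _)]
  rw [div_pow, div_div, div_le_iff₀ (by positivity)] at h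
  linarith

lemma exists_rpow_mul_exp_neg_half_le {β : ℝ} (hβ : 0 ≤ β) :
    ∃ C, ∀ u : ℝ, 0 ≤ u → u ^ β * exp (-(u / 2)) ≤ C := by
  refine ⟨1 + ⌈β⌉₊ ! * 2 ^ ⌈β⌉₊, fun u hu => ?_⟩
  calc u ^ β * exp (-(u / 2)) ≤ (1 + u ^ ⌈β⌉₊) * exp (-(u / 2)) := by
        gcongr; exact rpow_le_one_add_pow hu hβ (Nat.le_ceil β)
    _ = exp (-(u / 2)) + u ^ ⌈β⌉₊ * exp (-(u / 2)) := by ring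
    _ ≤ 1 + ⌈β⌉₊ ! * 2 ^ ⌈β⌉₊ :=
        add_le_add (exp_le_one_iff.mpr (by linarith)) (pow_mul_exp_neg_half_le _ hu)

noncomputable def rbar (γ : ℝ) (T : ℕ) (x : ℝ) : ℝ :=
  (2 / T) * ∑ t ∈ Ioc (T / 2) T, (1 - γ * x) ^ t

lemma continuous_rbar (γ : ℝ) (T : ℕ) : Continuous (rbar γ T) := by
  unfold rbar; fun_prop

lemma rbar_nonneg {γ x : ℝ} (T : ℕ) (hγx : γ * x ≤ 1) : 0 ≤ rbar γ T x := by
  unfold rbar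
  have : 0 ≤ 1 - γ * x := by linarith
  positivity

lemma rbar_le_exp {γ x : ℝ} {T : ℕ} (hT : Even T) (hγx₀ : 0 ≤ γ * x) (hγx : γ * x ≤ 1) :
    rbar γ T x ≤ exp (-(γ * T * x / 2)) := by
  obtain ⟨m, rfl⟩ := hT
  have hhalf : (m + m) / 2 = m := by omega
  have hq₀ : 0 ≤ 1 - γ * x := by linarith
  have hq₁ : 1 - γ * x ≤ 1 := by linarith
  have hsum : ∑ t ∈ Ioc ((m + m) / 2) (m + m), (1 - γ * x) ^ t ≤ m * (1 - γ * x) ^ m := by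
    rw [hhalf]
    calc ∑ t ∈ Ioc m (m + m), (1 - γ * x) ^ t ≤ ∑ _t ∈ Ioc m (m + m), (1 - γ * x) ^ m :=
          sum_le_sum fun t ht => pow_le_pow_of_le_one hq₀ hq₁ (mem_Ioc.mp ht).1.le
      _ = m * (1 - γ * x) ^ m := by simp [Nat.card_Ioc]
  have hweight : (2 / ((m + m : ℕ) : ℝ)) * m ≤ 1 := by
    rcases Nat.eq_zero_or_pos m with rfl | hm
    · simp
    · push_cast; field_simp; norm_num
  calc rbar γ (m + m) x ≤ (2 / ((m + m : ℕ) : ℝ)) * (m * (1 - γ * x) ^ m) := by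
        unfold rbar; gcongr
    _ ≤ (1 - γ * x) ^ m := by
        rw [← mul_assoc]; exact mul_le_of_le_one_left (by positivity) hweight
    _ ≤ exp (-(γ * x)) ^ m := by gcongr; exact one_sub_le_exp_neg _
    _ = exp (-(γ * ((m + m : ℕ) : ℝ) * x / 2)) := by rw [← exp_nat_mul]; push_cast; ring_nf

lemma rbar_mul_rpow_le {γ x β C : ℝ} {T : ℕ} (hγ : 0 < γ) (hT : 0 < T) (hTe : Even T)
    (hx : 0 ≤ x) (hγx : γ * x ≤ 1) (hC : ∀ u : ℝ, 0 ≤ u → u ^ β * exp (-(u / 2)) ≤ C) :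
    rbar γ T x * x ^ β ≤ C * (γ * T) ^ (-β) := by
  have hγT : 0 < γ * T := by positivity
  have hrescale : x ^ β = (γ * T * x) ^ β * (γ * T) ^ (-β) := by
    rw [mul_rpow hγT.le hx, mul_comm, ← mul_assoc, ← rpow_add hγT, neg_add_cancel, rpow_zero,
      one_mul]
  calc rbar γ T x * x ^ β ≤ exp (-(γ * T * x / 2)) * x ^ β := by
        gcongr; exact rbar_le_exp hTe (by positivity) hγx
    _ = (γ * T * x) ^ β * exp (-(γ * T * x / 2)) * (γ * T) ^ (-β) := by rw [hrescale]; ring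
    _ ≤ C * (γ * T) ^ (-β) := by gcongr; exact hC _ (by positivity)

lemma cfc_one_sub_mul_pow {A : Type*} [CStarAlgebra A] {a : A} (ha : IsSelfAdjoint a) (γ : ℝ)
    (t : ℕ) : cfc (fun x : ℝ => (1 - γ * x) ^ t) a = (1 - γ • a) ^ t := by
  rw [cfc_pow (fun x : ℝ => 1 - γ * x) t a, cfc_sub (fun _ => 1) (γ * ·) a, cfc_const_one ℝ a,
    cfc_const_mul_id γ a]

lemma geom_sum_one_sub_mul {R : Type*} [Ring R] (a : R) (t : ℕ) :
    (∑ k ∈ range t, (1 - a) ^ k) * a = 1 - (1 - a) ^ t := by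
  simpa using geom_sum_mul_neg (1 - a) t

section Operators

variable {H : Type*} [NormedAddCommGroup H] [InnerProductSpace ℂ H] [CompleteSpace H]

lemma Rbar_eq_cfc {Q : H →L[ℂ] H} (hQ : IsSelfAdjoint Q) (γ : ℝ) (T : ℕ) :
    Rbar γ T Q = cfc (rbar γ T) Q := by
  have hcoef : (2 / (T : ℂ)) = ((2 / T : ℝ) : ℂ) := by push_cast; rfl
  unfold Rbar rbar
  rw [cfc_const_mul _ _ Q, ← Finset.sum_fn, cfc_sum _ Q, hcoef, Complex.coe_smul]
  simp_rw [Complex.coe_smul, cfc_one_sub_mul_pow hQ]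

lemma mem_Icc_norm_of_mem_spectrum {Q : H →L[ℂ] H} (hQ : Q.IsPositive) {x : ℝ}
    (hx : x ∈ spectrum ℝ Q) : x ∈ Set.Icc 0 ‖Q‖ := by
  cases subsingleton_or_nontrivial H
  · simp [spectrum.of_subsingleton] at hx
  have hx₀ : 0 ≤ x := spectrum_nonneg_of_nonneg (Q.nonneg_iff_isPositive.mpr hQ) hx
  have := spectrum.norm_le_norm_of_mem hx
  rw [Real.norm_of_nonneg hx₀] at this
  exact ⟨hx₀, this⟩

lemma norm_Rbar_mul_opPow_le {Q : H →L[ℂ] H} (hQ : Q.IsPositive) {γ β C : ℝ} {T : ℕ}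
    (hγ : 0 < γ) (hT : 0 < T) (hTe : Even T) (hγQ : γ * ‖Q‖ ≤ 1) (hβ : 0 ≤ β)
    (hC : ∀ u : ℝ, 0 ≤ u → u ^ β * exp (-(u / 2)) ≤ C) :
    ‖Rbar γ T Q * opPow Q β‖ ≤ C * (γ * T) ^ (-β) := by
  have hC₀ : 0 ≤ C := (hC 0 le_rfl).trans' (by positivity)
  rw [Rbar_eq_cfc hQ.isSelfAdjoint, opPow, ← cfc_mul _ _ Q (continuous_rbar γ T).continuousOn]
  refine norm_cfc_le (by positivity) fun x hx => ?_
  obtain ⟨hx₀, hxQ⟩ := mem_Icc_norm_of_mem_spectrum hQ hx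
  have hγx : γ * x ≤ 1 := (mul_le_mul_of_nonneg_left hxQ hγ.le).trans hγQ
  rw [Real.norm_of_nonneg (mul_nonneg (rbar_nonneg T hγx) (rpow_nonneg hx₀ β))]
  exact rbar_mul_rpow_le hγ hT hTe hx₀ hγx hC

lemma Gbar_mul_self {T : ℕ} (hT : 0 < T) (hTe : Even T) (γ : ℝ) (Q : H →L[ℂ] H) :
    Gbar γ T Q * Q = 1 - Rbar γ T Q := by
  have hstep : ∀ t : ℕ, ((γ : ℂ) • ∑ k ∈ range t, (1 - (γ : ℂ) • Q) ^ k) * Q =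
      1 - (1 - (γ : ℂ) • Q) ^ t := fun t => by
    rw [smul_mul_assoc, ← mul_smul_comm, geom_sum_one_sub_mul]
  obtain ⟨m, rfl⟩ := hTe
  have hweight : (2 / ((m + m : ℕ) : ℂ)) * m = 1 := by
    have : (m : ℂ) ≠ 0 := by exact_mod_cast (by omega : m ≠ 0)
    push_cast; field_simp; norm_num
  unfold Gbar Rbar
  rw [smul_mul_assoc, sum_mul]
  simp_rw [hstep]
  rw [sum_sub_distrib, sum_const, Nat.card_Ioc, smul_sub, ← Nat.cast_smul_eq_nsmul ℂ, smul_smul,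
    show m + m - (m + m) / 2 = m by omega, hweight, one_smul]

end Operators

/-- Proposition C.8, part 3.
For a bounded positive self-adjoint operator `Q`, `γ > 0`, a positive even integer
`T` with `γ‖Q‖ < 1/4`, and `β ≥ 0`, there is a constant `c_β` (depending only
on `β`) such that for every `R > 0` and every `h` with `‖h‖ ≤ R`:
`‖Ḡ_T(Q) Q (Q^β h)‖ ≤ c_β R (γT)^{-β} + ‖Q^β h‖`. -/
theorem source_condition_iterate_bound
    {H : Type*} [NormedAddCommGroup H] [InnerProductSpace ℂ H] [CompleteSpace H]
    (β : ℝ) (hβ : 0 ≤ β) :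
    ∃ c : ℝ, ∀ Q : H →L[ℂ] H, Q.IsPositive →
      ∀ (γ : ℝ) (T : ℕ), 0 < γ → 0 < T → Even T → γ * ‖Q‖ < 1 / 4 →
      ∀ (R : ℝ), 0 < R → ∀ h : H, ‖h‖ ≤ R →
        ‖Gbar γ T Q (Q (opPow Q β h))‖ ≤
          c * R * (γ * (T : ℝ)) ^ (-β) + ‖opPow Q β h‖ := by
  obtain ⟨C, hC⟩ := exists_rpow_mul_exp_neg_half_le hβ
  refine ⟨C, fun Q hQ γ T hγ hT hTe hγQ R hR h hh => ?_⟩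
  have hresidual : Gbar γ T Q (Q (opPow Q β h)) = opPow Q β h - (Rbar γ T Q * opPow Q β) h :=
    DFunLike.congr_fun (Gbar_mul_self hT hTe γ Q) (opPow Q β h)
  have hbound := norm_Rbar_mul_opPow_le hQ hγ hT hTe (by linarith) hβ hC
  calc ‖Gbar γ T Q (Q (opPow Q β h))‖
      ≤ ‖opPow Q β h‖ + ‖(Rbar γ T Q * opPow Q β) h‖ := by
        rw [hresidual]; exact norm_sub_le _ _
    _ ≤ ‖opPow Q β h‖ + ‖Rbar γ T Q * opPow Q β‖ * R := by
        gcongr; exact (Rbar γ T Q * opPow Q β).le_opNorm_of_le hh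
    _ ≤ ‖opPow Q β h‖ + C * (γ * T) ^ (-β) * R := by gcongr
    _ = C * R * (γ * T) ^ (-β) + ‖opPow Q β h‖ := by ring
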